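/- arXiv:2502.07290 — 4 statements merged into one kernel-verified Lean document; each statement's English description precedes it below -/
import Mathlib

section
/- Let 0 < α ≤ 1 and let z be a real number with z > 1. Then ∑_{n=0}^{∞} Γ(2n+α)/(Γ(α)·Γ(2n+1))·z^{−n} = ((1+z^{−1/2})^{−α} + (1−z^{−1/2})^{−α})/2, where all powers are real powers. -/
/-!
The coefficient `Γ(n+α)/(Γ(α)Γ(n+1))` is the generalized binomial coefficient `(α+n-1 choose n)`,
so `∑ φ̃_α(n) xⁿ = (1-x)^(-α)` for `|x| < 1` by the binomial series. Averaging this at `x` and `-x`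
keeps only the even terms, and `x = z^(-1/2)` turns `x^(2n)` into `z^(-n)`.
-/

open Real

theorem Real.Gamma_add_nat_eq_mul_ascPochhammer_eval {a : ℝ} (ha : ∀ k : ℕ, a ≠ -k) (n : ℕ) :
    Gamma (a + n) = Gamma a * (ascPochhammer ℝ n).eval a := by
  induction n with
  | zero => simp
  | succ n ih =>
    have hn : a + n ≠ 0 := fun h => ha n (eq_neg_of_add_eq_zero_left h)
    rw [Nat.cast_succ, ← add_assoc, Gamma_add_one hn, ih, ascPochhammer_succ_eval]
    ring

theorem Ring.choose_add_sub_one_eq_ascPochhammer_eval_div {K : Type*} [Field K] [CharZero K]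
    (a : K) (n : ℕ) : Ring.choose (a + n - 1) n = (ascPochhammer K n).eval a / n.factorial := by
  rw [Ring.choose_eq_smul, Polynomial.descPochhammer_smeval_eq_ascPochhammer,
    Polynomial.ascPochhammer_smeval_eq_eval, smul_eq_mul, inv_mul_eq_div]
  ring_nf

theorem Real.Gamma_add_div_Gamma_mul_Gamma_eq_choose {a : ℝ} (ha : ∀ k : ℕ, a ≠ -k) (n : ℕ) :
    Gamma (n + a) / (Gamma a * Gamma (n + 1)) = Ring.choose (a + n - 1) n := by
  rw [add_comm (n : ℝ) a, Gamma_add_nat_eq_mul_ascPochhammer_eval ha, Gamma_nat_eq_factorial,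
    Ring.choose_add_sub_one_eq_ascPochhammer_eval_div, mul_div_mul_left _ _ (Gamma_ne_zero ha)]

theorem Real.hasSum_choose_add_sub_one_mul_pow {a x : ℝ} (hx : |x| < 1) :
    HasSum (fun n : ℕ => Ring.choose (a + n - 1) n * x ^ n) ((1 - x) ^ (-a)) := by
  have h := (one_div_one_sub_rpow_hasFPowerSeriesOnBall_zero a).hasSum
    (y := x) (by simpa [← ofReal_norm] using hx)
  simp only [FormalMultilinearSeries.ofScalars_apply_eq, smul_eq_mul, zero_add] at h
  rwa [one_div, ← rpow_neg (by linarith [abs_lt.mp hx])] at h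

theorem HasSum.even_part {K : Type*} [Field K] [TopologicalSpace K] [IsTopologicalRing K]
    [NeZero (2 : K)] {c : ℕ → K} {x A B : K}
    (hA : HasSum (fun n => c n * x ^ n) A) (hB : HasSum (fun n => c n * (-x) ^ n) B) :
    HasSum (fun n => c (2 * n) * x ^ (2 * n)) ((A + B) / 2) := by
  have hodd : ∀ k ∉ Set.range (2 * · : ℕ → ℕ), c k * x ^ k + c k * (-x) ^ k = 0 := by
    intro k hk
    have hk_odd : Odd k := Nat.not_even_iff_odd.mp fun ⟨m, hm⟩ => hk ⟨m, by simp only; omega⟩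
    rw [hk_odd.neg_pow]
    ring
  have hsum := ((Function.Injective.hasSum_iff (mul_right_injective₀ two_ne_zero) hodd).mpr
    (hA.add hB)).div_const 2
  convert hsum using 2 with n
  simp only [Function.comp_apply, (even_two_mul n).neg_pow]
  field_simp
  ring

theorem ztransform_phi_even_general (α : ℝ) (hα : 0 < α) (z : ℝ) (hz : 1 < z) :
    ∑' n : ℕ, Real.Gamma (2 * (n : ℝ) + α) /
        (Real.Gamma α * Real.Gamma (2 * (n : ℝ) + 1)) * z ^ (-(n : ℝ))
      = ((1 + z ^ (-(1 / 2 : ℝ))) ^ (-α) + (1 - z ^ (-(1 / 2 : ℝ))) ^ (-α)) / 2 := by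
  set x := z ^ (-(1 / 2 : ℝ)) with hx
  have hz0 : 0 < z := one_pos.trans hz
  have hx_abs : |x| < 1 := by
    rw [abs_of_pos (rpow_pos_of_pos hz0 _)]
    exact rpow_lt_one_of_one_lt_of_neg hz (by norm_num)
  have hα_ne : ∀ k : ℕ, α ≠ -k := fun k => (neg_nonpos.mpr k.cast_nonneg).trans_lt hα |>.ne'
  have hterm : ∀ n : ℕ, Gamma (2 * (n : ℝ) + α) / (Gamma α * Gamma (2 * (n : ℝ) + 1)) *
      z ^ (-(n : ℝ)) = Ring.choose (α + ↑(2 * n) - 1) (2 * n) * x ^ (2 * n) := by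
    intro n
    rw [← Gamma_add_div_Gamma_mul_Gamma_eq_choose hα_ne, hx, ← rpow_natCast, ← rpow_mul hz0.le]
    push_cast
    ring_nf
  have hsum := (hasSum_choose_add_sub_one_mul_pow (a := α) (abs_neg x ▸ hx_abs)).even_part
    (by simpa only [neg_neg] using hasSum_choose_add_sub_one_mul_pow (a := α) hx_abs)
  simp only [even_two_mul, Even.neg_pow, sub_neg_eq_add] at hsum
  rw [tsum_congr hterm, hsum.tsum_eq, add_comm]

/-- Z-transform of the even-indexed binomial subsequence `n ↦ φ̃_α(2n)`:
for `0 < α ≤ 1` and `z > 1`,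
`∑ₙ Γ(2n+α)/(Γ(α)·Γ(2n+1))·z^(-n) = ((1+z^(-1/2))^(-α) + (1-z^(-1/2))^(-α))/2`. -/
theorem ztransform_phi_even (α : ℝ) (hα : 0 < α) (hα' : α ≤ 1) (z : ℝ) (hz : 1 < z) :
    ∑' n : ℕ, Real.Gamma (2 * (n : ℝ) + α) /
        (Real.Gamma α * Real.Gamma (2 * (n : ℝ) + 1)) * z ^ (-(n : ℝ))
      = ((1 + z ^ (-(1 / 2 : ℝ))) ^ (-α) + (1 - z ^ (-(1 / 2 : ℝ))) ^ (-α)) / 2 :=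
  ztransform_phi_even_general α hα z hz
end

section
/- Let 0 < α ≤ 1 and let z be a real number with z > 1. Then ∑_{n=0}^{∞} Γ(2n+1+α)/(Γ(α)·Γ(2n+2))·z^{−n} = (z^{1/2}/2)·((1−z^{−1/2})^{−α} − (1+z^{−1/2})^{−α}), where all powers are real powers. -/
/-!
`Γ(n+α)/(Γ(α) n!)` is the coefficient of `wⁿ` in the binomial series of `(1 - w)^(-α)`, `|w| < 1`.
Taking the odd part `((1 - w)^(-α) - (1 + w)^(-α)) / 2` keeps exactly the odd coefficients;
substituting `w = z^(-1/2)` and dividing by `w` gives the Z-transform.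
-/

open Real

theorem Real.Gamma_nat_add_div_Gamma {α : ℝ} (hα : ∀ k : ℕ, α ≠ -k) (n : ℕ) :
    Gamma (n + α) / Gamma α = (ascPochhammer ℝ n).eval α := by
  have hΓ : Gamma α ≠ 0 := Real.Gamma_ne_zero hα
  induction n with
  | zero => simp [hΓ]
  | succ n ih =>
    have hn : (n : ℝ) + α ≠ 0 := fun h ↦ hα n (by linarith)
    rw [ascPochhammer_succ_eval, ← ih, Nat.cast_succ, add_right_comm, Real.Gamma_add_one hn]
    ring

theorem Real.Gamma_nat_add_div_eq_choose {α : ℝ} (hα : ∀ k : ℕ, α ≠ -k)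
    (n : ℕ) : Gamma (n + α) / (Gamma α * Gamma (n + 1)) = Ring.choose (α + n - 1) n := by
  rw [← Ring.multichoose_eq, Real.Gamma_nat_eq_factorial, ← div_div,
    Real.Gamma_nat_add_div_Gamma hα, ← Polynomial.ascPochhammer_smeval_eq_eval,
    ← Ring.factorial_nsmul_multichoose_eq_ascPochhammer, nsmul_eq_mul]
  field_simp

theorem hasSum_choose_mul_pow (a : ℝ) {y : ℝ} (hy : |y| < 1) :
    HasSum (fun n : ℕ ↦ Ring.choose (a + n - 1) n * y ^ n) ((1 - y) ^ (-a)) := by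
  have h := (one_div_one_sub_rpow_hasFPowerSeriesOnBall_zero a).hasSum
    (y := y) (by simpa [enorm_eq_nnnorm, ← NNReal.coe_lt_coe] using hy)
  rw [FormalMultilinearSeries.ofScalars_apply_eq'] at h
  simpa [Real.rpow_neg (by linarith [le_abs_self y] : (0 : ℝ) ≤ 1 - y)] using h

theorem HasSum.odd_terms {K : Type*} [Field K] [CharZero K] [TopologicalSpace K]
    [IsTopologicalRing K] {f : ℕ → K} {F G : K} (hF : HasSum f F)
    (hG : HasSum (fun n ↦ (-1) ^ n * f n) G) :
    HasSum (fun k ↦ f (2 * k + 1)) ((F - G) / 2) := by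
  have hinj : Function.Injective (fun k : ℕ ↦ 2 * k + 1) := fun a b h ↦ by simpa using h
  have hsupp : ∀ n ∉ Set.range (fun k : ℕ ↦ 2 * k + 1), (f n - (-1) ^ n * f n) / 2 = 0 := by
    intro n hn
    have : Even n := Nat.not_odd_iff_even.mp fun ⟨k, hk⟩ ↦ hn ⟨k, hk.symm⟩
    simp [this.neg_one_pow]
  have := (hinj.hasSum_iff hsupp).mpr ((hF.sub hG).div_const 2)
  refine this.congr_fun fun k ↦ ?_
  simp [(odd_two_mul_add_one k).neg_one_pow]

theorem hasSum_choose_mul_pow_odd (a : ℝ) {y : ℝ} (hy : |y| < 1) :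
    HasSum (fun k : ℕ ↦ Ring.choose (a + ↑(2 * k + 1) - 1) (2 * k + 1) * y ^ (2 * k + 1))
      (((1 - y) ^ (-a) - (1 + y) ^ (-a)) / 2) := by
  have hneg := hasSum_choose_mul_pow a (y := -y) (by rwa [abs_neg])
  simp_rw [sub_neg_eq_add, neg_pow y, mul_left_comm _ ((-1 : ℝ) ^ _)] at hneg
  exact (hasSum_choose_mul_pow a hy).odd_terms hneg

theorem ztransform_phi_odd_general (α : ℝ) (hα : 0 < α) (z : ℝ) (hz : 1 < z) :
    ∑' n : ℕ, Real.Gamma (2 * (n : ℝ) + 1 + α) /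
        (Real.Gamma α * Real.Gamma (2 * (n : ℝ) + 2)) * z ^ (-(n : ℝ))
      = z ^ ((1 / 2 : ℝ)) / 2 *
          ((1 - z ^ (-(1 / 2 : ℝ))) ^ (-α) - (1 + z ^ (-(1 / 2 : ℝ))) ^ (-α)) := by
  have hz0 : 0 < z := one_pos.trans hz
  have hα_ne : ∀ k : ℕ, α ≠ -k := fun k h ↦ by linarith [(Nat.cast_nonneg k : (0 : ℝ) ≤ k)]
  set x := z ^ (-(1 / 2 : ℝ))
  have hx0 : 0 < x := Real.rpow_pos_of_pos hz0 _
  have hx1 : |x| < 1 := by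
    rw [abs_of_pos hx0]; exact Real.rpow_lt_one_of_one_lt_of_neg hz (by norm_num)
  have hterm : ∀ n : ℕ, Real.Gamma (2 * (n : ℝ) + 1 + α) /
        (Real.Gamma α * Real.Gamma (2 * (n : ℝ) + 2)) * z ^ (-(n : ℝ))
      = Ring.choose (α + ↑(2 * n + 1) - 1) (2 * n + 1) * x ^ (2 * n + 1) / x := by
    intro n
    have hpow : z ^ (-(n : ℝ)) = x ^ (2 * n) := by
      rw [← Real.rpow_natCast, ← Real.rpow_mul hz0.le]; push_cast; ring_nf
    rw [← Real.Gamma_nat_add_div_eq_choose hα_ne, hpow, pow_succ,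
      mul_div_assoc, mul_div_cancel_right₀ _ hx0.ne']
    push_cast; ring_nf
  have hsqrt : z ^ (1 / 2 : ℝ) = x⁻¹ := by rw [← Real.rpow_neg hz0.le, neg_neg]
  rw [tsum_congr hterm, ((hasSum_choose_mul_pow_odd α hx1).div_const x).tsum_eq, hsqrt]
  ring

/-- Z-transform of the odd-indexed binomial subsequence `n ↦ φ̃_α(2n+1)`:
for `0 < α ≤ 1` and `z > 1`,
`∑ₙ Γ(2n+1+α)/(Γ(α)·Γ(2n+2))·z^(-n) = (z^(1/2)/2)·((1-z^(-1/2))^(-α) - (1+z^(-1/2))^(-α))`. -/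
theorem ztransform_phi_odd (α : ℝ) (hα : 0 < α) (hα' : α ≤ 1) (z : ℝ) (hz : 1 < z) :
    ∑' n : ℕ, Real.Gamma (2 * (n : ℝ) + 1 + α) /
        (Real.Gamma α * Real.Gamma (2 * (n : ℝ) + 2)) * z ^ (-(n : ℝ))
      = z ^ ((1 / 2 : ℝ)) / 2 *
          ((1 - z ^ (-(1 / 2 : ℝ))) ^ (-α) - (1 + z ^ (-(1 / 2 : ℝ))) ^ (-α)) :=
  ztransform_phi_odd_general α hα z hz
end

section
/- Let 0 < α ≤ 1 and let z be a real number with z > 1. Then ∑_{n=0}^{∞} Γ(2n+2+α)/(Γ(α)·Γ(2n+3))·z^{−n} = −z + (z/2)·((1+z^{−1/2})^{−α} + (1−z^{−1/2})^{−α}), where all powers are real powers. -/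
/-! With `x = z^(-1/2)`, the binomial series `(1 - x)^(-α) = ∑ multichoose α n · xⁿ`, where
`multichoose α n = Γ(n + α) / (Γ(α) n!)`, and its companion at `-x` add up to twice the even part
`∑ multichoose α (2n) · z^(-n)`; removing the constant term `n = 0` and multiplying by `z / 2`
shifts the index and gives the stated transform. -/

open Real

theorem Real.Gamma_add_nat_eq_mul_ascPochhammer {s : ℝ} (hs : ∀ k : ℕ, s ≠ -k) (n : ℕ) :
    Gamma (s + n) = Gamma s * (ascPochhammer ℝ n).eval s := by
  induction n with
  | zero => simp
  | succ n ih =>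
    have hsn : s + n ≠ 0 := fun h => hs n (by linarith)
    rw [Nat.cast_succ, ← add_assoc, Gamma_add_one hsn, ih, ascPochhammer_succ_eval]
    ring

theorem Real.multichoose_eq_Gamma_div {a : ℝ} (ha : ∀ k : ℕ, a ≠ -k) (n : ℕ) :
    Ring.multichoose a n = Gamma (n + a) / (Gamma a * Gamma (n + 1)) := by
  have hfact := Ring.factorial_nsmul_multichoose_eq_ascPochhammer a n
  rw [Polynomial.ascPochhammer_smeval_eq_eval, nsmul_eq_mul] at hfact
  have hΓ : Gamma a ≠ 0 := Gamma_ne_zero ha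
  rw [add_comm, Gamma_add_nat_eq_mul_ascPochhammer ha, Gamma_nat_eq_factorial, ← hfact]
  field_simp

theorem Real.hasSum_multichoose_mul_pow {a x : ℝ} (hx : |x| < 1) :
    HasSum (fun n => Ring.multichoose a n * x ^ n) ((1 - x) ^ (-a)) := by
  have hmem : x ∈ Metric.eball (0 : ℝ) 1 := by
    rw [← ENNReal.ofReal_one, Metric.eball_ofReal]; simpa using hx
  have h := (one_div_one_sub_rpow_hasFPowerSeriesOnBall_zero a).hasSum hmem
  simp only [FormalMultilinearSeries.ofScalars_apply_eq, smul_eq_mul, zero_add] at h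
  rw [rpow_neg (by linarith [(abs_lt.1 hx).2]), ← one_div]
  simpa only [Ring.multichoose_eq] using h

theorem HasSum.two_mul_even_of_neg {R : Type*} [CommRing R] [TopologicalSpace R] [ContinuousAdd R]
    {c : ℕ → R} {x a b : R} (ha : HasSum (fun n => c n * x ^ n) a)
    (hb : HasSum (fun n => c n * (-x) ^ n) b) :
    HasSum (fun n => 2 * (c (2 * n) * x ^ (2 * n))) (a + b) := by
  have hodd : ∀ m ∉ Set.range (2 * ·), c m * x ^ m + c m * (-x) ^ m = 0 := by
    intro m hm
    have hm_odd : Odd m := Nat.not_even_iff_odd.1 fun ⟨k, hk⟩ => hm ⟨k, by simp only; omega⟩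
    rw [hm_odd.neg_pow]
    ring
  have := ((mul_right_injective₀ two_ne_zero).hasSum_iff hodd).2 (ha.add hb)
  convert this using 2 with n
  simp only [pow_mul, Function.comp_apply, even_two, Even.neg_pow]
  ring

theorem Real.rpow_neg_half_pow_two_mul {z : ℝ} (hz : 0 ≤ z) (n : ℕ) :
    (z ^ (-(1 / 2 : ℝ))) ^ (2 * n) = z ^ (-(n : ℝ)) := by
  rw [← rpow_natCast, ← rpow_mul hz]
  congr 1
  push_cast
  ring

theorem ztransform_phi_even_shifted_general (α : ℝ) (hα : 0 < α) (z : ℝ) (hz : 1 < z) :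
    ∑' n : ℕ, Real.Gamma (2 * (n : ℝ) + 2 + α) /
        (Real.Gamma α * Real.Gamma (2 * (n : ℝ) + 3)) * z ^ (-(n : ℝ))
      = -z + z / 2 *
          ((1 + z ^ (-(1 / 2 : ℝ))) ^ (-α) + (1 - z ^ (-(1 / 2 : ℝ))) ^ (-α)) := by
  have hz0 : 0 < z := by linarith
  set x := z ^ (-(1 / 2 : ℝ))
  have hx : |x| < 1 := by
    rw [abs_of_pos (rpow_pos_of_pos hz0 _)]
    exact rpow_lt_one_of_one_lt_of_neg hz (by norm_num)
  have hα_ne : ∀ k : ℕ, α ≠ -k := fun k h => by linarith [k.cast_nonneg (α := ℝ)]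
  have heven := (hasSum_multichoose_mul_pow (a := α) hx).two_mul_even_of_neg
    (hasSum_multichoose_mul_pow (by rwa [abs_neg]))
  rw [sub_neg_eq_add] at heven
  have htail := (hasSum_nat_add_iff' 1).2 heven
  simp only [Finset.range_one, Finset.sum_singleton, mul_zero, Ring.multichoose_zero_right,
    pow_zero, mul_one] at htail
  have hterm : ∀ n : ℕ, z / 2 * (2 * (Ring.multichoose α (2 * (n + 1)) * x ^ (2 * (n + 1)))) =
      Gamma (2 * (n : ℝ) + 2 + α) / (Gamma α * Gamma (2 * (n : ℝ) + 3)) * z ^ (-(n : ℝ)) := by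
    intro n
    rw [multichoose_eq_Gamma_div hα_ne, rpow_neg_half_pow_two_mul hz0.le, rpow_neg hz0.le, rpow_neg hz0.le, rpow_natCast, rpow_natCast, pow_succ]
    push_cast
    ring_nf
    field_simp
  rw [← tsum_congr hterm, (htail.mul_left (z / 2)).tsum_eq]
  ring

/-- Z-transform of the shifted even-indexed binomial subsequence `n ↦ φ̃_α(2n+2)`:
for `0 < α ≤ 1` and `z > 1`,
`∑ₙ Γ(2n+2+α)/(Γ(α)·Γ(2n+3))·z^(-n) = -z + (z/2)·((1+z^(-1/2))^(-α) + (1-z^(-1/2))^(-α))`. -/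
theorem ztransform_phi_even_shifted (α : ℝ) (hα : 0 < α) (hα' : α ≤ 1) (z : ℝ) (hz : 1 < z) :
    ∑' n : ℕ, Real.Gamma (2 * (n : ℝ) + 2 + α) /
        (Real.Gamma α * Real.Gamma (2 * (n : ℝ) + 3)) * z ^ (-(n : ℝ))
      = -z + z / 2 *
          ((1 + z ^ (-(1 / 2 : ℝ))) ^ (-α) + (1 - z ^ (-(1 / 2 : ℝ))) ^ (-α)) :=
  ztransform_phi_even_shifted_general α hα z hz
end

section
/- Let 0 < α ≤ 1, let z be a real number with z > 1, regarded as a complex number, and let ω = exp(2πi/3) ∈ ℂ. Then ∑_{n=0}^{∞} Γ(3n+1+α)/(Γ(α)·Γ(3n+2))·z^{−n} = (z^{1/3}/3)·((1−z^{−1/3})^{−α} + ω²·(1−ω·z^{−1/3})^{−α} + ω·(1−ω²·z^{−1/3})^{−α}), where z^{±1/3} is the real power of z and the complex powers (·)^{−α} are principal-branch complex powers; in particular the right-hand side is real. -/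
/-!
The weights `Γ(n + α) / (Γ(α) n!)` are the Taylor coefficients of `(1 - x) ^ (-α)` on the unit
disc. Evaluating this binomial series at `x = ω ^ j z^(-1/3)` for `j = 0, 1, 2` and combining the
three values with weights `1, ω², ω` keeps exactly the terms of index `n ≡ 1 (mod 3)`; the factor
`z^(1/3)` then turns `x ^ (3m + 1)` into `z^(-m)`.
-/

/-- The paper's `φ̃_α(n)`. -/
noncomputable def binomialWeight (α : ℝ) (n : ℕ) : ℝ :=
  Real.Gamma (n + α) / (Real.Gamma α * Real.Gamma (n + 1))

theorem Real.Gamma_add_nat_div_Gamma_eq {α : ℝ} (hα : ∀ k : ℕ, α ≠ -k) (n : ℕ) :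
    Real.Gamma (α + n) / Real.Gamma α = (ascPochhammer ℝ n).eval α := by
  induction n with
  | zero => simpa using div_self (Real.Gamma_ne_zero fun m => hα m)
  | succ n ih =>
    have hne : α + n ≠ 0 := fun h => hα n (by linarith)
    rw [Nat.cast_succ, ← add_assoc, Real.Gamma_add_one hne, ascPochhammer_succ_eval, ← ih]
    ring

theorem binomialWeight_eq_choose {α : ℝ} (hα : ∀ k : ℕ, α ≠ -k) (n : ℕ) :
    binomialWeight α n = Ring.choose (α + n - 1) n := by
  have hfact : (n.factorial : ℝ) ≠ 0 := by positivity
  rw [← Ring.multichoose_eq, eq_comm, ← mul_right_inj' hfact, ← nsmul_eq_mul,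
    Ring.factorial_nsmul_multichoose_eq_ascPochhammer, Polynomial.ascPochhammer_smeval_eq_eval,
    ← Real.Gamma_add_nat_div_Gamma_eq hα, binomialWeight, Real.Gamma_nat_eq_factorial,
    add_comm α]
  field_simp

theorem hasSum_binomialWeight_mul_pow {α : ℝ} (hα : ∀ k : ℕ, α ≠ -k) {x : ℂ}
    (hx : ‖x‖ < 1) :
    HasSum (fun n => (binomialWeight α n : ℂ) * x ^ n) ((1 - x) ^ (-(α : ℂ))) := by
  have hx' : x ∈ Metric.eball (0 : ℂ) 1 := by
    simpa [← ENNReal.ofReal_one, Metric.eball_ofReal] using hx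
  simpa [FormalMultilinearSeries.ofScalars_apply_eq, binomialWeight_eq_choose hα,
    Complex.ofReal_choose, Complex.cpow_neg, mul_comm] using
    (Complex.one_div_one_sub_cpow_hasFPowerSeriesOnBall_zero (α : ℂ)).hasSum hx'

theorem IsPrimitiveRoot.one_add_sq_mul_pow_add_mul_sq_pow {R : Type*} [CommRing R] [IsDomain R]
    {ω : R} (hω : IsPrimitiveRoot ω 3) (n : ℕ) :
    1 + ω ^ 2 * ω ^ n + ω * (ω ^ 2) ^ n = if n % 3 = 1 then 3 else 0 := by
  have hsum : 1 + ω + ω ^ 2 = 0 := by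
    simpa [Finset.sum_range_succ] using hω.geom_sum_eq_zero (by norm_num)
  rw [← pow_mul, ← pow_add, ← pow_succ', pow_eq_pow_mod (2 + n) hω.pow_eq_one,
    pow_eq_pow_mod (2 * n + 1) hω.pow_eq_one]
  rcases (by omega : n % 3 = 0 ∨ n % 3 = 1 ∨ n % 3 = 2) with h | h | h
  · rw [show (2 + n) % 3 = 2 by omega, show (2 * n + 1) % 3 = 1 by omega, if_neg (by omega)]
    linear_combination hsum
  · rw [show (2 + n) % 3 = 0 by omega, show (2 * n + 1) % 3 = 0 by omega, if_pos h]
    norm_num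
  · rw [show (2 + n) % 3 = 1 by omega, show (2 * n + 1) % 3 = 2 by omega, if_neg (by omega)]
    linear_combination hsum

theorem hasSum_comp_three_mul_add_one_of_isPrimitiveRoot {R : Type*} [Field R]
    [TopologicalSpace R] [IsTopologicalRing R] {ω : R} (hω : IsPrimitiveRoot ω 3)
    {f : ℕ → R} {a b c : R} (ha : HasSum f a) (hb : HasSum (fun n => ω ^ n * f n) b)
    (hc : HasSum (fun n => (ω ^ 2) ^ n * f n) c) :
    HasSum (fun m => f (3 * m + 1)) ((a + ω ^ 2 * b + ω * c) / 3) := by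
  have hfilter :
      HasSum (fun n => if n % 3 = 1 then f n else 0) ((a + ω ^ 2 * b + ω * c) / 3) := by
    convert ((ha.add (hb.mul_left (ω ^ 2))).add (hc.mul_left ω)).div_const 3 using 1
    ext n
    have h3 : (3 : R) ≠ 0 := by exact_mod_cast hω.neZero'.out
    have hfactor := hω.one_add_sq_mul_pow_add_mul_sq_pow n
    rw [eq_div_iff h3]
    split_ifs at hfactor ⊢ <;> linear_combination (-f n) * hfactor
  have hinj : Function.Injective (fun m : ℕ => 3 * m + 1) := fun m k h => by simpa using h
  refine ((hinj.hasSum_iff fun n hn => if_neg fun h => hn ⟨n / 3, by grind⟩).mpr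
    hfilter).congr_fun fun m => ?_
  simp

theorem ztransform_phi_mod3_1_general (α : ℝ) (hα : 0 < α) (z : ℝ) (hz : 1 < z)
    (ω : ℂ) (hω : ω = Complex.exp (2 * (Real.pi : ℂ) * Complex.I / 3)) :
    HasSum (fun n : ℕ =>
        ((Real.Gamma (3 * (n : ℝ) + 1 + α) /
            (Real.Gamma α * Real.Gamma (3 * (n : ℝ) + 2)) * z ^ (-(n : ℝ)) : ℝ) : ℂ))
      ((((z ^ ((1 / 3 : ℝ)) : ℝ) : ℂ) / 3) *
        ((1 - ((z ^ (-(1 / 3 : ℝ)) : ℝ) : ℂ)) ^ ((-α : ℝ) : ℂ)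
          + ω ^ 2 * (1 - ω * ((z ^ (-(1 / 3 : ℝ)) : ℝ) : ℂ)) ^ ((-α : ℝ) : ℂ)
          + ω * (1 - ω ^ 2 * ((z ^ (-(1 / 3 : ℝ)) : ℝ) : ℂ)) ^ ((-α : ℝ) : ℂ))) := by
  have hprim : IsPrimitiveRoot ω 3 := by
    simpa [hω] using Complex.isPrimitiveRoot_exp 3 (by norm_num)
  have hα₀ : ∀ k : ℕ, α ≠ -k := fun k h => by linarith [(Nat.cast_nonneg k : (0 : ℝ) ≤ k)]
  set w : ℝ := z ^ (-(1 / 3 : ℝ)) with hw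
  have hw1 : ‖(w : ℂ)‖ < 1 := by
    rw [Complex.norm_real, Real.norm_of_nonneg (by positivity)]
    exact Real.rpow_lt_one_of_one_lt_of_neg hz (by norm_num)
  have hbinom : ∀ u : ℂ, ‖u‖ = 1 →
      HasSum (fun n => u ^ n * ((binomialWeight α n : ℂ) * w ^ n)) ((1 - u * w) ^ (-(α : ℂ))) :=
    fun u hu => by
      simpa [mul_pow, mul_left_comm] using
        hasSum_binomialWeight_mul_pow hα₀ (x := u * w) (by rwa [norm_mul, hu, one_mul])
  have hfiltered := (hasSum_comp_three_mul_add_one_of_isPrimitiveRoot hprim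
    (by simpa using hbinom 1 (by simp)) (hbinom ω (hprim.norm'_eq_one (by norm_num)))
    (hbinom (ω ^ 2) (by simp [hprim.norm'_eq_one]))).mul_left ((z ^ (1 / 3 : ℝ) : ℝ) : ℂ)
  rw [Complex.ofReal_neg, div_mul_eq_mul_div, mul_div_assoc]
  refine hfiltered.congr_fun fun m => ?_
  have hpow : z ^ (1 / 3 : ℝ) * w ^ (3 * m + 1) = z ^ (-(m : ℝ)) := by
    rw [hw, ← Real.rpow_natCast, ← Real.rpow_mul (by positivity),
      ← Real.rpow_add (by positivity)]
    push_cast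
    ring_nf
  rw [← hpow, binomialWeight]
  push_cast
  ring_nf

/-- Z-transform of the subsequence `n ↦ φ̃_α(3n+1)` for `0 < α ≤ 1`, `z > 1`,
with `ω = exp(2πi/3)`:
`∑ₙ Γ(3n+1+α)/(Γ(α)·Γ(3n+2))·z^(-n)
  = (z^(1/3)/3)·((1-z^(-1/3))^(-α) + ω²·(1-ω·z^(-1/3))^(-α) + ω·(1-ω²·z^(-1/3))^(-α))`,
the sum of real terms being taken in `ℂ`, so in particular the RHS is real. -/
theorem ztransform_phi_mod3_1 (α : ℝ) (hα : 0 < α) (hα' : α ≤ 1) (z : ℝ) (hz : 1 < z)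
    (ω : ℂ) (hω : ω = Complex.exp (2 * (Real.pi : ℂ) * Complex.I / 3)) :
    HasSum (fun n : ℕ =>
        ((Real.Gamma (3 * (n : ℝ) + 1 + α) /
            (Real.Gamma α * Real.Gamma (3 * (n : ℝ) + 2)) * z ^ (-(n : ℝ)) : ℝ) : ℂ))
      ((((z ^ ((1 / 3 : ℝ)) : ℝ) : ℂ) / 3) *
        ((1 - ((z ^ (-(1 / 3 : ℝ)) : ℝ) : ℂ)) ^ ((-α : ℝ) : ℂ)
          + ω ^ 2 * (1 - ω * ((z ^ (-(1 / 3 : ℝ)) : ℝ) : ℂ)) ^ ((-α : ℝ) : ℂ)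
          + ω * (1 - ω ^ 2 * ((z ^ (-(1 / 3 : ℝ)) : ℝ) : ℂ)) ^ ((-α : ℝ) : ℂ))) :=
  ztransform_phi_mod3_1_general α hα z hz ω hω
end
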